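/- Let T be a thick locally finite tree, let G ≤ Aut(T), let x and v be distinct vertices, and let i ≥ 0. Then: (i) Θ(v,x,i) is a normal subgroup of the image of G(v,x) acting on S_v(x,1); (ii) if w is a neighbour of v with d(w,x) = d(v,x) + 1, then S_w(x,1) = S_v(x,1) and Θ(w,x,i) is a normal subgroup of Θ(v,x,i); consequently, Θ(v,x,i) is a subnormal subgroup of the image of the arc stabilizer G(x,x') acting on S_v(x,1), where x' is the neighbour of x on the geodesic from x to v. -/

import Mathlib

/-- The pointwise stabilizer of a set of vertices, inside the full symmetric group. -/
def ptStab {V : Type*} (s : Set V) : Subgroup (Equiv.Perm V) where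
  carrier := {g | ∀ v ∈ s, g v = v}
  one_mem' := by intro v _; rfl
  mul_mem' := by
    intro a b ha hb v hv
    simp only [Set.mem_setOf_eq] at *
    rw [Equiv.Perm.mul_apply, hb v hv, ha v hv]
  inv_mem' := by
    intro a ha v hv
    simp only [Set.mem_setOf_eq] at *
    calc a⁻¹ v = a⁻¹ (a v) := by rw [ha v hv]
      _ = v := a.symm_apply_apply v

/-- `G` consists of automorphisms of the graph `T`. -/
def PreservesAdj {V : Type*} (T : SimpleGraph V) (G : Subgroup (Equiv.Perm V)) : Prop :=
  ∀ g ∈ G, ∀ a b : V, T.Adj a b ↔ T.Adj (g a) (g b)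

/-- `G` is `k`-type-distance-transitive. -/
def TypeDistTrans {V : Type*} (T : SimpleGraph V) (G : Subgroup (Equiv.Perm V)) (k : ℕ) : Prop :=
  ∀ x y x' y' : V, T.dist x y = k → T.dist x' y' = k → Even (T.dist x x') →
    ∃ g ∈ G, g x = x' ∧ g y = y'

/-- The tree is thick: every vertex has at least three neighbours. -/
def Thick {V : Type*} (T : SimpleGraph V) : Prop :=
  ∀ v : V, ∃ a b c : V, T.Adj v a ∧ T.Adj v b ∧ T.Adj v c ∧ a ≠ b ∧ a ≠ c ∧ b ≠ c

/-- `N` is subnormal in `H`: a finite chain of successive normal inclusions joins them. -/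
def SubnormalIn {X : Type*} [Group X] (N H : Subgroup X) : Prop :=
  ∃ (m : ℕ) (c : ℕ → Subgroup X), c 0 = N ∧ c m = H ∧
    ∀ i < m, c i ≤ c (i + 1) ∧ ∀ g ∈ c (i + 1), ∀ n ∈ c i, g * n * g⁻¹ ∈ c i

/-- `Θ(w, x, i)`: the local action at `x` (on the neighbours of `x` other than `x'`) of
the pointwise stabilizer in `G` of `{x} ∪ B^w_i(x)`, where `B^w_i(x)` is the set of
vertices `u` with `d(w,u) = d(w,x) + i` such that `x` does not lie on the geodesic from
`w` to `u`. -/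
def Theta {V : Type*} (T : SimpleGraph V) (G : Subgroup (Equiv.Perm V)) (x x' : V)
    (res : ↥(G ⊓ ptStab {x} ⊓ ptStab {x'}) →* Equiv.Perm {u : V // T.Adj x u ∧ u ≠ x'})
    (w : V) (i : ℕ) : Subgroup (Equiv.Perm {u : V // T.Adj x u ∧ u ≠ x'}) :=
  Subgroup.map res
    ((ptStab {u : V | T.dist w u = T.dist w x + i ∧
        T.dist w x + T.dist x u ≠ T.dist w u}).comap
      (G ⊓ ptStab {x} ⊓ ptStab {x'}).subtype)

/-!
In a tree an automorphism fixing two vertices fixes the geodesic between them, and thickness lets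
one move a vertex arbitrarily far away from two given vertices at once. Pushing a neighbour `w` of
`v` (further from `x`) out into `B^v_i(x)` therefore shows that an automorphism fixing `x` and
`B^v_i(x)` also fixes `w`, `v` and `B^w_i(x)`. Since `B^w_i(x)` is described by distances to `w`
and `x`, every automorphism fixing `w` and `x` normalizes its pointwise stabilizer, and normality
passes to the images under the local action. Walking along the geodesic `x', …, v` yields a chain
`Θ(v,x,i) ◁ ⋯ ◁ Θ(x',x,i)` ending in the image of `G(x,x')`.
-/

namespace SimpleGraph

variable {V W : Type*} {T : SimpleGraph V} {T' : SimpleGraph W}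

lemma Hom.edist_le (f : T →g T') (a b : V) : T'.edist (f a) (f b) ≤ T.edist a b := by
  by_cases h : T.edist a b = ⊤
  · simp [h]
  obtain ⟨p, hp⟩ := exists_walk_of_edist_ne_top h
  calc T'.edist (f a) (f b) ≤ (p.map f).length := SimpleGraph.edist_le _
    _ = T.edist a b := by rw [Walk.length_map, hp]

lemma Iso.edist_eq (f : T ≃g T') (a b : V) : T'.edist (f a) (f b) = T.edist a b :=
  le_antisymm (f.toHom.edist_le a b) (by simpa using f.symm.toHom.edist_le (f a) (f b))

lemma Iso.dist_eq (f : T ≃g T') (a b : V) : T'.dist (f a) (f b) = T.dist a b := by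
  simp only [dist, f.edist_eq]

lemma Connected.exists_adj_dist_add_one_eq (hconn : T.Connected) {u y : V} (h : u ≠ y) :
    ∃ z, T.Adj u z ∧ T.dist y z + 1 = T.dist y u := by
  obtain ⟨p, hp⟩ := hconn.exists_walk_length_eq_dist u y
  cases p with
  | nil => exact absurd rfl h
  | @cons _ z _ hadj q =>
    refine ⟨z, hadj, ?_⟩
    have hq := dist_le q
    have htri := hconn.dist_triangle (u := u) (v := z) (w := y)
    rw [Walk.length_cons] at hp
    rw [dist_eq_one_iff_adj.mpr hadj] at htri
    rw [dist_comm (u := y), dist_comm (u := y)]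
    omega

lemma IsTree.eq_of_dist_add_dist_eq (hT : T.IsTree) {a c m₁ m₂ : V}
    (h₁ : T.dist a m₁ + T.dist m₁ c = T.dist a c) (h₂ : T.dist a m₂ + T.dist m₂ c = T.dist a c)
    (hd : T.dist a m₁ = T.dist a m₂) : m₁ = m₂ := by
  have onPath : ∀ m, T.dist a m + T.dist m c = T.dist a c →
      ∃ P : T.Path a c, P.1.getVert (T.dist a m) = m := by
    intro m hm
    obtain ⟨p, -, hp⟩ := hT.connected.exists_path_of_dist a m
    obtain ⟨q, -, hq⟩ := hT.connected.exists_path_of_dist m c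
    refine ⟨⟨p.append q, (p.append q).isPath_of_length_eq_dist ?_⟩, ?_⟩
    · rw [Walk.length_append, hp, hq, hm]
    · rw [Walk.getVert_append, ← hp]
      simp
  obtain ⟨P₁, e₁⟩ := onPath m₁ h₁
  obtain ⟨P₂, e₂⟩ := onPath m₂ h₂
  rw [← e₁, ← e₂, hd, (hT.isAcyclic.subsingleton_path a c).elim P₁ P₂]

lemma IsTree.apply_eq_of_dist_add_dist_eq (hT : T.IsTree) {σ : V → V}
    (hσ : ∀ a b, T.dist (σ a) (σ b) = T.dist a b) {a c m : V} (ha : σ a = a) (hc : σ c = c)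
    (hm : T.dist a m + T.dist m c = T.dist a c) : σ m = m := by
  have h₁ := hσ a m
  have h₂ := hσ m c
  rw [ha] at h₁
  rw [hc] at h₂
  exact hT.eq_of_dist_add_dist_eq (by omega) hm (by omega)

lemma IsTree.eq_of_adj_of_dist_add_one_eq (hT : T.IsTree) {x n₁ n₂ y : V} (h₁ : T.Adj x n₁)
    (h₂ : T.Adj x n₂) (hd₁ : T.dist y n₁ + 1 = T.dist y x) (hd₂ : T.dist y n₂ + 1 = T.dist y x) :
    n₁ = n₂ := by
  have e₁ := dist_eq_one_iff_adj.mpr h₁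
  have e₂ := dist_eq_one_iff_adj.mpr h₂
  rw [dist_comm (u := y), dist_comm (u := y)] at hd₁ hd₂
  exact hT.eq_of_dist_add_dist_eq (a := x) (c := y) (by omega) (by omega) (by omega)

lemma _root_.Thick.exists_adj_dist_eq_add_one (hthick : Thick T)
    (hT : T.IsTree) (p q u : V) :
    ∃ n, T.Adj u n ∧ T.dist p n = T.dist p u + 1 ∧ T.dist q n = T.dist q u + 1 := by
  obtain ⟨A, B, C, hA, hB, hC, hAB, hAC, hBC⟩ := hthick u
  by_contra! hno
  have toward : ∀ z, T.Adj u z → T.dist p z + 1 = T.dist p u ∨ T.dist q z + 1 = T.dist q u := by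
    intro z hz
    rcases hT.dist_eq_dist_add_one_of_adj p hz with hp | hp
    · exact .inl hp.symm
    rcases hT.dist_eq_dist_add_one_of_adj q hz with hq | hq
    · exact .inr hq.symm
    exact absurd hq (hno z hz hp)
  -- Only one neighbour of `u` steps towards `p`, and only one towards `q`.
  rcases toward A hA with hA' | hA' <;> rcases toward B hB with hB' | hB' <;>
    rcases toward C hC with hC' | hC'
  all_goals first
    | exact hAB (hT.eq_of_adj_of_dist_add_one_eq hA hB hA' hB')
    | exact hAC (hT.eq_of_adj_of_dist_add_one_eq hA hC hA' hC')
    | exact hBC (hT.eq_of_adj_of_dist_add_one_eq hB hC hB' hC')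

lemma _root_.Thick.exists_dist_eq_add (hthick : Thick T)
    (hT : T.IsTree) (p q u : V) (t : ℕ) :
    ∃ u', T.dist u u' = t ∧ T.dist p u' = T.dist p u + t ∧ T.dist q u' = T.dist q u + t := by
  induction t with
  | zero => exact ⟨u, by simp⟩
  | succ t ih =>
    obtain ⟨w, hw, hwp, hwq⟩ := ih
    obtain ⟨n, hn, hnp, hnq⟩ := hthick.exists_adj_dist_eq_add_one hT p q w
    have h₁ := hT.connected.dist_triangle (u := u) (v := w) (w := n)
    have h₂ := hT.connected.dist_triangle (u := p) (v := u) (w := n)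
    rw [dist_eq_one_iff_adj.mpr hn] at h₁
    exact ⟨n, by omega, by omega, by omega⟩

/-- `B^w_i(x)` in the notation of `Theta`. -/
def farSphere (T : SimpleGraph V) (w x : V) (i : ℕ) : Set V :=
  {u | T.dist w u = T.dist w x + i ∧ T.dist w x + T.dist x u ≠ T.dist w u}

lemma apply_mem_farSphere_iff {σ : V → V} (hσ : ∀ a b, T.dist (σ a) (σ b) = T.dist a b)
    {w x : V} (hw : σ w = w) (hx : σ x = x) (i : ℕ) (u : V) :
    σ u ∈ farSphere T w x i ↔ u ∈ farSphere T w x i := by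
  have h₁ := hσ w u
  have h₂ := hσ x u
  rw [hw] at h₁
  rw [hx] at h₂
  simp only [farSphere, Set.mem_ofPred_eq, h₁, h₂]

variable {σ : V → V} {x v w : V} {i : ℕ}

lemma IsTree.apply_eq_of_adj_of_fixes_farSphere (hT : T.IsTree) (hthick : Thick T)
    (hσ : ∀ a b, T.dist (σ a) (σ b) = T.dist a b) (hx : σ x = x) (hxv : x ≠ v)
    (hB : ∀ u ∈ farSphere T v x i, σ u = u) (hvw : T.Adj v w)
    (hwx : T.dist w x = T.dist v x + 1) : σ w = w := by
  have hpos := hT.connected.pos_dist_of_ne hxv.symm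
  obtain ⟨u, hwu, hvu, hxu⟩ := hthick.exists_dist_eq_add hT v x w (T.dist v x + i - 1)
  rw [dist_eq_one_iff_adj.mpr hvw] at hvu
  rw [dist_comm (u := w)] at hwx
  have hu : σ u = u := hB u ⟨by omega, by omega⟩
  exact hT.apply_eq_of_dist_add_dist_eq hσ hx hu (by omega)

lemma IsTree.apply_eq_self_of_fixes_farSphere (hT : T.IsTree) (hthick : Thick T)
    (hσ : ∀ a b, T.dist (σ a) (σ b) = T.dist a b) (hx : σ x = x) (hxv : x ≠ v)
    (hB : ∀ u ∈ farSphere T v x i, σ u = u) : σ v = v := by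
  obtain ⟨w, hvw, hxw, -⟩ := hthick.exists_adj_dist_eq_add_one hT x x v
  have hw := hT.apply_eq_of_adj_of_fixes_farSphere hthick hσ hx hxv hB hvw
    (by rw [dist_comm, hxw, dist_comm])
  exact hT.apply_eq_of_dist_add_dist_eq hσ hx hw (by rw [dist_eq_one_iff_adj.mpr hvw, hxw])

lemma IsTree.fixes_farSphere_of_adj (hT : T.IsTree) (hthick : Thick T)
    (hσ : ∀ a b, T.dist (σ a) (σ b) = T.dist a b) (hx : σ x = x) (hvw : T.Adj v w)
    (hwx : T.dist w x = T.dist v x + 1) (hB : ∀ u ∈ farSphere T w x i, σ u = u) :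
    ∀ u ∈ farSphere T v x i, σ u = u := by
  rintro u ⟨hvu, hxu⟩
  have htri := hT.connected.dist_triangle (u := v) (v := x) (w := u)
  rcases hT.dist_eq_dist_add_one_of_adj u hvw with h | h <;>
    rw [dist_comm (u := u), dist_comm (u := u)] at h
  · -- `w` lies between `v` and `u`: push `u` two steps away from `w` and `x` into `B^w_i(x)`.
    obtain ⟨u', huu', hwu', hxu'⟩ := hthick.exists_dist_eq_add hT w x u 2
    have hu' : σ u' = u' := hB u' ⟨by omega, by omega⟩
    exact hT.apply_eq_of_dist_add_dist_eq hσ hx hu' (by omega)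
  · exact hB u ⟨by omega, by omega⟩

lemma IsTree.dist_eq_add_one_iff_of_adj (hT : T.IsTree) (hxv : x ≠ v) (hvw : T.Adj v w)
    (hwx : T.dist w x = T.dist v x + 1) {u : V} (hxu : T.Adj x u) :
    T.dist u w = T.dist x w + 1 ↔ T.dist u v = T.dist x v + 1 := by
  obtain ⟨y, hvy, hy⟩ := hT.connected.exists_adj_dist_add_one_eq hxv.symm
  have hdv := hT.dist_eq_dist_add_one_of_adj v hxu
  have hdw := hT.dist_eq_dist_add_one_of_adj w hxu
  have hvw₁ := dist_eq_one_iff_adj.mpr hvw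
  have hxu₁ := dist_eq_one_iff_adj.mpr hxu
  have htri₁ := hT.connected.dist_triangle (u := u) (v := v) (w := w)
  have htri₂ := hT.connected.dist_triangle (u := u) (v := x) (w := y)
  have htri₃ := hT.connected.dist_triangle (u := u) (v := y) (w := v)
  have hvy₁ := dist_eq_one_iff_adj.mpr hvy
  have c₁ : T.dist v u = T.dist u v := dist_comm
  have c₂ : T.dist w u = T.dist u w := dist_comm
  have c₃ : T.dist v x = T.dist x v := dist_comm
  have c₄ : T.dist w x = T.dist x w := dist_comm
  have c₅ : T.dist y v = T.dist v y := dist_comm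
  have c₆ : T.dist u x = T.dist x u := dist_comm
  constructor
  · intro h
    omega
  · intro h
    by_contra hne
    -- Otherwise both `w` and the first step `y` from `v` towards `x` are first steps towards `u`.
    have hyw : y = w := hT.eq_of_adj_of_dist_add_one_eq (y := u) hvy hvw (by omega) (by omega)
    subst hyw
    omega

end SimpleGraph

open SimpleGraph

lemma mem_normalizer_ptStab {V : Type*} {s : Set V} {σ : Equiv.Perm V}
    (hs : ∀ u, σ u ∈ s ↔ u ∈ s) : σ ∈ Subgroup.normalizer (ptStab s : Set (Equiv.Perm V)) := by
  refine Subgroup.mem_normalizer_iff.mpr fun g => ⟨fun hg u hu => ?_, fun hg u hu => ?_⟩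
  · have hu' : σ⁻¹ u ∈ s := (hs _).mp (by simpa using hu)
    rw [Equiv.Perm.mul_apply, Equiv.Perm.mul_apply, hg _ hu']
    exact σ.apply_symm_apply u
  · simpa using hg (σ u) ((hs u).mpr hu)

lemma PreservesAdj.dist_apply {V : Type*} {T : SimpleGraph V} {G : Subgroup (Equiv.Perm V)}
    (hG : PreservesAdj T G) {g : Equiv.Perm V} (hg : g ∈ G) (a b : V) :
    T.dist (g a) (g b) = T.dist a b :=
  Iso.dist_eq ⟨g, (hG g hg _ _).symm⟩ a b

def NormalIn {X : Type*} [Group X] (N M : Subgroup X) : Prop :=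
  N ≤ M ∧ M ≤ Subgroup.normalizer (N : Set X)

lemma NormalIn.conj_mem {X : Type*} [Group X] {N M : Subgroup X} (h : NormalIn N M) :
    ∀ a ∈ M, ∀ n ∈ N, a * n * a⁻¹ ∈ N :=
  fun _ ha n hn => (Subgroup.mem_normalizer_iff.mp (h.2 ha) n).mp hn

lemma SubnormalIn.refl {X : Type*} [Group X] (N : Subgroup X) : SubnormalIn N N :=
  ⟨0, fun _ => N, rfl, rfl, by simp⟩

lemma SubnormalIn.of_normalIn {X : Type*} [Group X] {N M K : Subgroup X} (hNM : NormalIn N M)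
    (h : SubnormalIn M K) : SubnormalIn N K := by
  obtain ⟨m, c, h0, hm, hc⟩ := h
  refine ⟨m + 1, fun j => if j = 0 then N else c (j - 1), by simp, by simpa using hm, ?_⟩
  rintro (_ | j) hj
  · simpa [h0] using ⟨hNM.1, hNM.conj_mem⟩
  · simpa using hc j (by omega)

section ArcStabilizer

variable {V : Type*} {T : SimpleGraph V} {G : Subgroup (Equiv.Perm V)} {x x' : V}

/-- `Theta T G x x' res w i` is the image under `res` of `arcFixing G x x' (T.farSphere w x i)`. -/
def arcFixing (G : Subgroup (Equiv.Perm V)) (x x' : V) (s : Set V) :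
    Subgroup ↥(G ⊓ ptStab {x} ⊓ ptStab {x'}) :=
  (ptStab s).comap (G ⊓ ptStab {x} ⊓ ptStab {x'}).subtype

lemma arcFixing_right_eq_top : arcFixing G x x' {x'} = ⊤ :=
  eq_top_iff.mpr fun γ _ _ hu => hu ▸ γ.2.2 x' rfl

variable {v w : V} {i : ℕ}

lemma arcFixing_farSphere_le_self (hT : T.IsTree) (hthick : Thick T) (hG : PreservesAdj T G)
    (hxv : x ≠ v) : arcFixing G x x' (T.farSphere v x i) ≤ arcFixing G x x' {v} := by
  rintro γ hγ _ rfl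
  exact hT.apply_eq_self_of_fixes_farSphere hthick (hG.dist_apply γ.2.1.1) (γ.2.1.2 x rfl) hxv hγ

lemma arcFixing_farSphere_le_of_adj (hT : T.IsTree) (hthick : Thick T) (hG : PreservesAdj T G)
    (hxv : x ≠ v) (hvw : T.Adj v w) (hwx : T.dist w x = T.dist v x + 1) :
    arcFixing G x x' (T.farSphere v x i) ≤ arcFixing G x x' {w} := by
  rintro γ hγ _ rfl
  exact hT.apply_eq_of_adj_of_fixes_farSphere hthick (hG.dist_apply γ.2.1.1) (γ.2.1.2 x rfl) hxv
    hγ hvw hwx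

lemma arcFixing_farSphere_mono (hT : T.IsTree) (hthick : Thick T) (hG : PreservesAdj T G)
    (hvw : T.Adj v w) (hwx : T.dist w x = T.dist v x + 1) :
    arcFixing G x x' (T.farSphere w x i) ≤ arcFixing G x x' (T.farSphere v x i) :=
  fun γ hγ => hT.fixes_farSphere_of_adj hthick (hG.dist_apply γ.2.1.1) (γ.2.1.2 x rfl) hvw hwx hγ

lemma arcFixing_singleton_le_normalizer (hG : PreservesAdj T G) :
    arcFixing G x x' {w} ≤ Subgroup.normalizer (arcFixing G x x' (T.farSphere w x i) : Set _) :=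
  fun γ hγ => Subgroup.le_normalizer_comap _ <| mem_normalizer_ptStab <|
    apply_mem_farSphere_iff (hG.dist_apply γ.2.1.1) (hγ w rfl) (γ.2.1.2 x rfl) i

end ArcStabilizer

section Theta

variable {V : Type*} {T : SimpleGraph V} {G : Subgroup (Equiv.Perm V)} {x x' v w : V} {i : ℕ}
  (res : ↥(G ⊓ ptStab {x} ⊓ ptStab {x'}) →* Equiv.Perm {u : V // T.Adj x u ∧ u ≠ x'})

lemma theta_normalIn_map_stabilizer (hT : T.IsTree) (hthick : Thick T)
    (hG : PreservesAdj T G) (hxv : x ≠ v) :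
    NormalIn (Theta T G x x' res v i) ((arcFixing G x x' {v}).map res) :=
  ⟨Subgroup.map_mono (arcFixing_farSphere_le_self hT hthick hG hxv),
    (Subgroup.map_mono (arcFixing_singleton_le_normalizer hG)).trans
      (Subgroup.le_normalizer_map res)⟩

lemma theta_normalIn_theta_of_adj (hT : T.IsTree) (hthick : Thick T)
    (hG : PreservesAdj T G) (hxv : x ≠ v) (hvw : T.Adj v w)
    (hwx : T.dist w x = T.dist v x + 1) :
    NormalIn (Theta T G x x' res w i) (Theta T G x x' res v i) :=
  ⟨Subgroup.map_mono (arcFixing_farSphere_mono hT hthick hG hvw hwx),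
    (Subgroup.map_mono ((arcFixing_farSphere_le_of_adj hT hthick hG hxv hvw hwx).trans
      (arcFixing_singleton_le_normalizer hG))).trans (Subgroup.le_normalizer_map res)⟩

lemma theta_normalIn_range (hG : PreservesAdj T G) :
    NormalIn (Theta T G x x' res x' i) res.range := by
  refine ⟨Subgroup.map_le_range _ _, ?_⟩
  rw [MonoidHom.range_eq_map, ← arcFixing_right_eq_top]
  exact (Subgroup.map_mono (arcFixing_singleton_le_normalizer hG)).trans
    (Subgroup.le_normalizer_map res)

lemma subnormalIn_theta (hT : T.IsTree) (hthick : Thick T) (hG : PreservesAdj T G)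
    (hadj : T.Adj x x') :
    ∀ k w, T.dist x' w = k → T.dist x w = k + 1 →
      SubnormalIn (Theta T G x x' res w i) res.range
  | 0, w, hk, _ => by
    obtain rfl : x' = w := hT.connected.dist_eq_zero_iff.mp hk
    exact (SubnormalIn.refl _).of_normalIn (theta_normalIn_range res hG)
  | k + 1, w, hk, hk' => by
    -- Step back from `w` towards `x'`; by the triangle inequality `u` is still one step further
    -- from `x` than from `x'`.
    obtain ⟨u, hwu, hu⟩ := hT.connected.exists_adj_dist_add_one_eq (u := w) (y := x')
      (fun h => by simp [h] at hk)
    have h₁ := hT.connected.dist_triangle (u := x) (v := x') (w := u)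
    have h₂ := hT.connected.dist_triangle (u := x) (v := u) (w := w)
    rw [dist_eq_one_iff_adj.mpr hadj] at h₁
    rw [dist_eq_one_iff_adj.mpr hwu.symm] at h₂
    have hxu : T.dist x u = k + 1 := by omega
    have hnormal := theta_normalIn_theta_of_adj res hT hthick hG (i := i)
      (fun h => by simp [h] at hxu) hwu.symm (by rw [dist_comm, hk', dist_comm, hxu])
    exact (subnormalIn_theta hT hthick hG hadj k u (by omega) hxu).of_normalIn hnormal

end Theta

theorem theta_subnormal_general
    {V : Type*} (T : SimpleGraph V) (hconn : T.Connected) (hacyc : T.IsAcyclic)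
    (hthick : Thick T)
    (G : Subgroup (Equiv.Perm V)) (hG : PreservesAdj T G)
    (x v : V) (hxv : x ≠ v) (i : ℕ)
    (x' : V) (hadj : T.Adj x x') (hgeo : T.dist x v = T.dist x' v + 1)
    (res : ↥(G ⊓ ptStab {x} ⊓ ptStab {x'}) →* Equiv.Perm {u : V // T.Adj x u ∧ u ≠ x'}) :
    (Theta T G x x' res v i ≤
        Subgroup.map res ((ptStab {v}).comap (G ⊓ ptStab {x} ⊓ ptStab {x'}).subtype) ∧
      ∀ a ∈ Subgroup.map res ((ptStab {v}).comap (G ⊓ ptStab {x} ⊓ ptStab {x'}).subtype),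
        ∀ m ∈ Theta T G x x' res v i, a * m * a⁻¹ ∈ Theta T G x x' res v i) ∧
    (∀ w : V, T.Adj v w → T.dist w x = T.dist v x + 1 →
      ({u : V | T.Adj x u ∧ T.dist u w = T.dist x w + 1} =
        {u : V | T.Adj x u ∧ T.dist u v = T.dist x v + 1}) ∧
      Theta T G x x' res w i ≤ Theta T G x x' res v i ∧
      ∀ a ∈ Theta T G x x' res v i, ∀ m ∈ Theta T G x x' res w i,
        a * m * a⁻¹ ∈ Theta T G x x' res w i) ∧
    SubnormalIn (Theta T G x x' res v i) res.range := by
  have hT : T.IsTree := ⟨hconn, hacyc⟩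
  have hstab := theta_normalIn_map_stabilizer res (i := i) hT hthick hG hxv
  refine ⟨⟨hstab.1, hstab.conj_mem⟩, fun w hvw hwx => ⟨?_, ?_⟩,
    subnormalIn_theta res hT hthick hG hadj _ v rfl hgeo⟩
  · ext u
    exact and_congr_right (hT.dist_eq_add_one_iff_of_adj hxv hvw hwx)
  · have hnormal := theta_normalIn_theta_of_adj res (i := i) hT hthick hG hxv hvw hwx
    exact ⟨hnormal.1, hnormal.conj_mem⟩

/-- With `x' ` the neighbour of `x` on the geodesic from `x` to `v`
(so that `S_v(x,1)` is the set of neighbours of `x` other than `x'`):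
(i) `Θ(v,x,i)` is a normal subgroup of the image of `G(v,x)` acting on `S_v(x,1)`;
(ii) if `w` is a neighbour of `v` with `d(w,x) = d(v,x)+1`, then `S_w(x,1) = S_v(x,1)`
and `Θ(w,x,i)` is a normal subgroup of `Θ(v,x,i)`; consequently `Θ(v,x,i)` is subnormal
in the image of the arc stabilizer `G(x,x')` acting on `S_v(x,1)`. -/
theorem theta_subnormal
    {V : Type*} (T : SimpleGraph V) (hconn : T.Connected) (hacyc : T.IsAcyclic)
    (hthick : Thick T) (hlf : ∀ u : V, (T.neighborSet u).Finite)
    (G : Subgroup (Equiv.Perm V)) (hG : PreservesAdj T G)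
    (x v : V) (hxv : x ≠ v) (i : ℕ)
    (x' : V) (hadj : T.Adj x x') (hgeo : T.dist x v = T.dist x' v + 1)
    (res : ↥(G ⊓ ptStab {x} ⊓ ptStab {x'}) →* Equiv.Perm {u : V // T.Adj x u ∧ u ≠ x'})
    (hres : ∀ (g : ↥(G ⊓ ptStab {x} ⊓ ptStab {x'})) (u : {u : V // T.Adj x u ∧ u ≠ x'}),
        ((res g) u : V) = (g : Equiv.Perm V) (u : V)) :
    (Theta T G x x' res v i ≤
        Subgroup.map res ((ptStab {v}).comap (G ⊓ ptStab {x} ⊓ ptStab {x'}).subtype) ∧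
      ∀ a ∈ Subgroup.map res ((ptStab {v}).comap (G ⊓ ptStab {x} ⊓ ptStab {x'}).subtype),
        ∀ m ∈ Theta T G x x' res v i, a * m * a⁻¹ ∈ Theta T G x x' res v i) ∧
    (∀ w : V, T.Adj v w → T.dist w x = T.dist v x + 1 →
      ({u : V | T.Adj x u ∧ T.dist u w = T.dist x w + 1} =
        {u : V | T.Adj x u ∧ T.dist u v = T.dist x v + 1}) ∧
      Theta T G x x' res w i ≤ Theta T G x x' res v i ∧
      ∀ a ∈ Theta T G x x' res v i, ∀ m ∈ Theta T G x x' res w i,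
        a * m * a⁻¹ ∈ Theta T G x x' res w i) ∧
    SubnormalIn (Theta T G x x' res v i) res.range :=
  theta_subnormal_general T hconn hacyc hthick G hG x v hxv i x' hadj hgeo res
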